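/- For all natural numbers n, r and m, the number of block-separated overpartitions of n whose underlying partition has exactly r distinct part-sizes and whose set of overlined part-sizes has exactly m elements equals C(r − m + 1, m) · d_r(n), where C(a,b) is the binomial coefficient (equal to 0 when b > a) and d_r(n) is the number of partitions of n having exactly r distinct part-sizes. -/

import Mathlib

/-- The separation condition: no two consecutive distinct part-sizes (i.e. two elements
of `S` with no part-size of `p` strictly between them) are both overlined. -/
def SepCond {n : ℕ} (p : Nat.Partition n) (S : Finset ℕ) : Prop :=
  ∀ d ∈ S, ∀ e ∈ S, d < e → ∃ c ∈ p.parts.toFinset, d < c ∧ c < e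

instance {n : ℕ} (p : Nat.Partition n) : DecidablePred (SepCond p) := fun _ =>
  Finset.decidableDforallFinset

/-- `d r n` is the number of partitions of `n` with exactly `r` distinct part-sizes. -/
def d (r n : ℕ) : ℕ :=
  ((Finset.univ : Finset (Nat.Partition n)).filter
    (fun p => p.parts.toFinset.card = r)).card

/-!
A set of overlined part sizes is separated in the set of distinct part sizes, a condition that
only sees the order type of the `r` part sizes. Transported along the order isomorphism with
`{0, …, r - 1}` it says that no two consecutive integers are chosen. Splitting on whether the
largest element `r + 1` of `{0, …, r + 1}` is chosen gives the recurrence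
`f (r + 2) (m + 1) = f (r + 1) (m + 1) + f r m` for the number of such `m`-subsets, which together
with Pascal's rule gives `f r m = C(r + 1 - m, m)`, independently of the partition.
-/

open Finset

section Separated

variable {α β : Type*} [LinearOrder α] [LinearOrder β]

def IsSeparatedIn (S T : Finset α) : Prop :=
  ∀ d ∈ S, ∀ e ∈ S, d < e → ∃ c ∈ T, d < c ∧ c < e

instance (T : Finset α) : DecidablePred (IsSeparatedIn · T) := fun _ =>
  Finset.decidableDforallFinset

def separatedSubsets (T : Finset α) (m : ℕ) : Finset (Finset α) :=
  (T.powersetCard m).filter (IsSeparatedIn · T)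

theorem isSeparatedIn_map_iff (f : α ↪o β) {S T : Finset α} :
    IsSeparatedIn (S.map f.toEmbedding) (T.map f.toEmbedding) ↔ IsSeparatedIn S T := by
  simp [IsSeparatedIn]

theorem card_separatedSubsets_map (f : α ↪o β) (T : Finset α) (m : ℕ) :
    #(separatedSubsets (T.map f.toEmbedding) m) = #(separatedSubsets T m) := by
  rw [separatedSubsets, powersetCard_map, filter_map, card_map]
  congr 2
  exact funext fun S => propext (isSeparatedIn_map_iff f)

theorem card_separatedSubsets_eq_range {T : Finset α} {r : ℕ} (hT : #T = r) (m : ℕ) :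
    #(separatedSubsets T m) = #(separatedSubsets (range r) m) := by
  rw [← map_orderEmbOfFin_univ T hT, ← Nat.Iio_eq_range, ← Fin.map_valEmbedding_univ]
  exact (card_separatedSubsets_map _ _ m).trans
    (card_separatedSubsets_map (Fin.valOrderEmb r) _ m).symm

end Separated

theorem isSeparatedIn_range_iff {S : Finset ℕ} {r : ℕ} (hS : S ⊆ range r) :
    IsSeparatedIn S (range r) ↔ ∀ a ∈ S, a + 1 ∉ S := by
  constructor
  · intro h a ha ha'
    obtain ⟨c, -, hac, hca⟩ := h a ha (a + 1) ha' (Nat.lt_succ_self a)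
    omega
  · intro h a ha b hb hab
    have hb' : b < r := mem_range.mp (hS hb)
    have : a + 1 ≠ b := fun hb1 => h a ha (hb1 ▸ hb)
    exact ⟨a + 1, mem_range.mpr (by omega), by omega, by omega⟩

def nonadjacentSubsets (r m : ℕ) : Finset (Finset ℕ) :=
  ((range r).powersetCard m).filter fun S => ∀ a ∈ S, a + 1 ∉ S

theorem separatedSubsets_range (r m : ℕ) :
    separatedSubsets (range r) m = nonadjacentSubsets r m :=
  filter_congr fun _ hS => isSeparatedIn_range_iff (mem_powersetCard.mp hS).1

theorem card_nonadjacentSubsets_zero (r : ℕ) : #(nonadjacentSubsets r 0) = 1 := by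
  simp [nonadjacentSubsets, filter_singleton]

theorem nonadjacentSubsets_eq_empty {r m : ℕ} (h : r < m) : nonadjacentSubsets r m = ∅ := by
  rw [nonadjacentSubsets, powersetCard_eq_empty.mpr (by rwa [card_range]), filter_empty]

theorem notMem_of_mem_nonadjacentSubsets {r m i : ℕ} {S : Finset ℕ}
    (hS : S ∈ nonadjacentSubsets r m) (hi : r ≤ i) : i ∉ S := fun h => by
  have := mem_range.mp ((mem_powersetCard.mp (mem_filter.mp hS).1).1 h)
  omega

theorem card_nonadjacentSubsets_add_two (r m : ℕ) :
    #(nonadjacentSubsets (r + 2) (m + 1)) =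
      #(nonadjacentSubsets (r + 1) (m + 1)) + #(nonadjacentSubsets r m) := by
  -- choosing `r + 1` forbids `r`
  have hinsert : ((range (r + 1)).powersetCard m).filter
      (fun S => ∀ a ∈ insert (r + 1) S, a + 1 ∉ insert (r + 1) S) =
        nonadjacentSubsets r m := by
    ext S
    simp only [nonadjacentSubsets, mem_filter, mem_powersetCard, subset_iff, mem_range, mem_insert]
    grind
  rw [nonadjacentSubsets, range_add_one, powersetCard_succ_insert notMem_range_self, filter_union,
    filter_image, ← nonadjacentSubsets, hinsert, card_union_of_disjoint, card_image_of_injOn]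
  · intro S hS T hT hST
    rw [← erase_insert (notMem_of_mem_nonadjacentSubsets hS r.le_succ), hST,
      erase_insert (notMem_of_mem_nonadjacentSubsets hT r.le_succ)]
  · refine disjoint_left.mpr fun S hS hS' => ?_
    obtain ⟨T, -, rfl⟩ := mem_image.mp hS'
    exact notMem_of_mem_nonadjacentSubsets hS le_rfl (mem_insert_self _ _)

theorem card_nonadjacentSubsets : ∀ r m : ℕ, #(nonadjacentSubsets r m) = (r + 1 - m).choose m
  | r, 0 => by simp [card_nonadjacentSubsets_zero]
  | 0, m + 1 => by simp [nonadjacentSubsets_eq_empty (Nat.zero_lt_succ m)]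
  | 1, 1 => by decide
  | 1, m + 2 => by simp [nonadjacentSubsets_eq_empty (show 1 < m + 2 by omega)]
  | r + 2, m + 1 => by
    rw [card_nonadjacentSubsets_add_two, card_nonadjacentSubsets (r + 1) (m + 1),
      card_nonadjacentSubsets r m]
    rcases le_or_gt m (r + 1) with h | h
    · rw [show r + 2 + 1 - (m + 1) = r + 1 - m + 1 by omega,
        show r + 1 + 1 - (m + 1) = r + 1 - m by omega, Nat.choose_succ_succ', add_comm]
    · rw [show r + 2 + 1 - (m + 1) = 0 by omega, show r + 1 + 1 - (m + 1) = 0 by omega,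
        show r + 1 - m = 0 by omega, Nat.choose_eq_zero_of_lt (Nat.zero_lt_succ m),
        Nat.choose_eq_zero_of_lt (by omega : 0 < m)]

theorem card_separatedSubsets {α : Type*} [LinearOrder α] {T : Finset α} {r : ℕ} (hT : #T = r)
    (m : ℕ) : #(separatedSubsets T m) = (r + 1 - m).choose m := by
  rw [card_separatedSubsets_eq_range hT, separatedSubsets_range, card_nonadjacentSubsets]

/-- The number of block-separated overpartitions of `n` whose underlying partition has
exactly `r` distinct part-sizes and with exactly `m` overlined part-sizes equals
`C(r - m + 1, m) · d_r(n)`, where `C` is the binomial coefficient (vanishing when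
`m > r - m + 1`). -/
theorem card_blockSep_fixed_r_m (n r m : ℕ) :
    (∑ p ∈ (Finset.univ : Finset (Nat.Partition n)).filter
        (fun p => p.parts.toFinset.card = r),
      (p.parts.toFinset.powerset.filter (fun S => SepCond p S ∧ S.card = m)).card)
      = Nat.choose (r + 1 - m) m * d r n := by
  have hterm : ∀ p ∈ (univ : Finset (Nat.Partition n)).filter (fun p => #p.parts.toFinset = r),
      #(p.parts.toFinset.powerset.filter (fun S => SepCond p S ∧ #S = m)) =
        (r + 1 - m).choose m := fun p hp => by
    rw [← card_separatedSubsets (mem_filter.mp hp).2 m, separatedSubsets, powersetCard_eq_filter,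
      filter_filter]
    exact congrArg card (filter_congr fun S _ => and_comm)
  rw [sum_const_nat hterm, d, mul_comm]
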